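/- Let β ∈ B_n be a braid with 1 < β < σ₁ in the Dehornoy ordering. Then a contradiction follows; more precisely, if β is i-positive for some i > 1 then σ₁⁻¹β is also i-positive, hence σ₁ < β, and if i = 1 then β is a nonzero power of σ₁, which cannot satisfy 1 < β < σ₁. -/

import Mathlib

/-
If `σ_i` occurs in a word only positively, no free reduction can cancel an occurrence of it, so
the `i`-positive braids are exactly the images of arbitrary (not necessarily reduced) `i`-positive
words. Prefixing such a word with `σ₁⁻¹` keeps it `i`-positive when `i > 1`, and a `1`-positive word
is a positive power of `σ₁`. Either way `σ₁⁻¹β` is positive or trivial, which the trichotomy of the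
ordering forbids when `β⁻¹σ₁` is positive.
-/

/-- The braid relations on generators indexed by `Fin m` (generator `i` is `σ_{i+1}`). -/
def braidRels (m : ℕ) : Set (FreeGroup (Fin m)) :=
  {r | (∃ i j : Fin m, (i : ℕ) + 1 < (j : ℕ) ∧
        r = FreeGroup.of i * FreeGroup.of j * (FreeGroup.of i)⁻¹ * (FreeGroup.of j)⁻¹) ∨
       (∃ i j : Fin m, (i : ℕ) + 1 = (j : ℕ) ∧
        r = FreeGroup.of i * FreeGroup.of j * FreeGroup.of i *
            (FreeGroup.of j * FreeGroup.of i * FreeGroup.of j)⁻¹)}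

/-- The Artin braid group `B_n`, presented with generators `σ₁, …, σ_{n-1}`. -/
abbrev BraidGroup (n : ℕ) := PresentedGroup (braidRels (n - 1))

/-- The Artin generator; `braidGen i` represents `σ_{i+1}`. -/
def braidGen {n : ℕ} (i : Fin (n - 1)) : BraidGroup n := PresentedGroup.of i

/-- `σ_k` (1-indexed), or `1` if out of range. -/
def sigma' (n k : ℕ) : BraidGroup n :=
  if h : k - 1 < n - 1 then braidGen ⟨k - 1, h⟩ else 1

/-- A braid is `i`-positive (`i : Fin (n-1)` standing for `σ_{i+1}`) if it is represented by
a word using only generators of index ≤ i, in which generator `i` occurs, and only with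
positive exponent. -/
def IsIPositive {n : ℕ} (β : BraidGroup n) (i : Fin (n - 1)) : Prop :=
  ∃ w : FreeGroup (Fin (n - 1)), PresentedGroup.mk (braidRels (n - 1)) w = β ∧
    (∀ l ∈ w.toWord, l.1 ≤ i ∧ (l.1 = i → l.2 = true)) ∧ (∃ l ∈ w.toWord, l.1 = i)

/-- A braid is `i`-negative if its inverse is `i`-positive. -/
def IsINegative {n : ℕ} (β : BraidGroup n) (i : Fin (n - 1)) : Prop :=
  IsIPositive β⁻¹ i

/-- Dehornoy-positive braids: `i`-positive for some `i`. -/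
def DPos {n : ℕ} (β : BraidGroup n) : Prop := ∃ i, IsIPositive β i

/-- The Dehornoy ordering on `B_n`. -/
def DLt {n : ℕ} (a b : BraidGroup n) : Prop := DPos (a⁻¹ * b)

/-- The copy of `B_r` inside `B_n` generated by `σ₁, …, σ_{r-1}`. -/
def braidSub (n r : ℕ) : Subgroup (BraidGroup n) :=
  Subgroup.closure {β | ∃ i : Fin (n - 1), (i : ℕ) < r - 1 ∧ β = braidGen i}

/-- `σ_a σ_{a-1} ⋯ σ_b` (1-indexed). -/
def descSeg (n a b : ℕ) : BraidGroup n :=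
  (((List.range (a - b + 1)).map fun j => sigma' n (a - j)).prod)

/-- The Garside half twist `Δ_k = (σ_{k-1}⋯σ₁)(σ_{k-1}⋯σ₂)⋯(σ_{k-1}σ_{k-2})(σ_{k-1})`
viewed in `B_n`. -/
def Delta (n k : ℕ) : BraidGroup n :=
  (((List.range (k - 1)).map fun m => descSeg n (k - 1) (m + 1)).prod)

namespace FreeGroup

variable {α : Type*}

theorem mk_replicate_true (x : α) (m : ℕ) : mk (List.replicate m (x, true)) = of x ^ m := by
  rw [of, pow_mk, List.flatten_replicate_singleton]

theorem Red.mem_of_mem_of_inv_not_mem {L₁ L₂ : List (α × Bool)} {x : α} {b : Bool}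
    (h : Red L₁ L₂) (hx : (x, b) ∈ L₁) (hx' : (x, !b) ∉ L₁) : (x, b) ∈ L₂ := by
  induction h with
  | refl => exact hx
  | @tail L₃ _ hL hstep ih =>
    have hinv : (x, !b) ∉ L₃ := fun h => hx' ((Red.sublist hL).subset h)
    obtain ⟨L, L', y, c⟩ := hstep
    simp only [List.mem_append, List.mem_cons, Prod.mk.injEq] at ih hinv ⊢
    grind

end FreeGroup

section IPositive

variable {n : ℕ}

def IsIPositiveWord {m : ℕ} (L : List (Fin m × Bool)) (i : Fin m) : Prop :=
  (∀ l ∈ L, l.1 ≤ i ∧ (l.1 = i → l.2 = true)) ∧ ∃ l ∈ L, l.1 = i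

theorem IsIPositiveWord.reduce {m : ℕ} {L : List (Fin m × Bool)} {i : Fin m}
    (h : IsIPositiveWord L i) : IsIPositiveWord (FreeGroup.reduce L) i := by
  obtain ⟨hletters, l, hl, rfl⟩ := h
  have hsub := FreeGroup.Red.sublist (FreeGroup.reduce.red (L := L))
  refine ⟨fun l' hl' => hletters l' (hsub.subset hl'), l, ?_, rfl⟩
  have hpos : l = (l.1, true) := Prod.ext rfl ((hletters l hl).2 rfl)
  rw [hpos] at hl ⊢
  refine FreeGroup.reduce.red.mem_of_mem_of_inv_not_mem hl fun hneg => ?_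
  simpa using (hletters _ hneg).2 rfl

theorem isIPositive_iff_exists_word {β : BraidGroup n} {i : Fin (n - 1)} :
    IsIPositive β i ↔ ∃ L, PresentedGroup.mk (braidRels (n - 1)) (FreeGroup.mk L) = β ∧
      IsIPositiveWord L i := by
  constructor
  · rintro ⟨w, rfl, hw⟩
    exact ⟨w.toWord, by rw [FreeGroup.mk_toWord], hw⟩
  · rintro ⟨L, rfl, hL⟩
    refine ⟨FreeGroup.mk L, rfl, ?_⟩
    rw [FreeGroup.toWord_mk]
    exact hL.reduce

theorem isIPositive_braidGen_pow (i : Fin (n - 1)) {m : ℕ} (hm : 0 < m) :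
    IsIPositive (braidGen i ^ m) i := by
  refine isIPositive_iff_exists_word.2 ⟨List.replicate m (i, true), ?_, ?_, (i, true), ?_, rfl⟩
  · rw [FreeGroup.mk_replicate_true, map_pow]
    rfl
  · intro l hl
    rw [List.eq_of_mem_replicate hl]
    exact ⟨le_rfl, fun _ => rfl⟩
  · exact List.mem_replicate.2 ⟨hm.ne', rfl⟩

theorem IsIPositive.braidGen_inv_mul {β : BraidGroup n} {i j : Fin (n - 1)}
    (h : IsIPositive β i) (hji : j < i) : IsIPositive ((braidGen j)⁻¹ * β) i := by
  obtain ⟨L, rfl, hletters, l, hl, hli⟩ := isIPositive_iff_exists_word.1 h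
  refine isIPositive_iff_exists_word.2
    ⟨(j, false) :: L, ?_, ?_, l, List.mem_cons_of_mem _ hl, hli⟩
  · rw [← List.singleton_append, ← FreeGroup.mul_mk, map_mul]
    rfl
  · simp only [List.mem_cons, forall_eq_or_imp]
    exact ⟨⟨hji.le, fun h => absurd h hji.ne⟩, hletters⟩

theorem IsIPositive.exists_eq_braidGen_pow {β : BraidGroup n} {i : Fin (n - 1)}
    (h : IsIPositive β i) (hi : (i : ℕ) = 0) : ∃ m : ℕ, 0 < m ∧ β = braidGen i ^ m := by
  obtain ⟨L, rfl, hletters, l, hl, -⟩ := isIPositive_iff_exists_word.1 h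
  have hL : L = List.replicate L.length (i, true) := by
    refine List.eq_replicate_of_mem fun l hl => ?_
    have hl₁ : l.1 = i := Fin.ext (by have := (hletters l hl).1; omega)
    exact Prod.ext hl₁ ((hletters l hl).2 hl₁)
  refine ⟨L.length, List.length_pos_of_mem hl, ?_⟩
  rw [hL, FreeGroup.mk_replicate_true, map_pow, List.length_replicate]
  rfl

end IPositive

/-- No braid `β` satisfies `1 < β < σ₁` in the Dehornoy ordering.  More precisely: if `β`
is `i`-positive for some `i > 1` then `σ₁⁻¹β` is again `i`-positive (so `σ₁ < β`); if `β`
is `1`-positive then `β` is a nonzero power of `σ₁`; and `1 < β < σ₁` yields `False`. -/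
theorem stmt_7 {n : ℕ} (hn : 2 ≤ n)
    (htri : ∀ a : BraidGroup n,
      (a = 1 ∧ ¬DPos a ∧ ¬DPos a⁻¹) ∨ (DPos a ∧ a ≠ 1 ∧ ¬DPos a⁻¹) ∨
      (DPos a⁻¹ ∧ a ≠ 1 ∧ ¬DPos a))
    (β : BraidGroup n) :
    letI σ₁ : BraidGroup n := braidGen (⟨0, by omega⟩ : Fin (n - 1))
    (∀ i : Fin (n - 1), 0 < (i : ℕ) → IsIPositive β i → IsIPositive (σ₁⁻¹ * β) i) ∧
    (IsIPositive β (⟨0, by omega⟩ : Fin (n - 1)) → ∃ k : ℤ, k ≠ 0 ∧ β = σ₁ ^ k) ∧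
    (DPos β → DPos (β⁻¹ * σ₁) → False) := by
  set σ₁ : BraidGroup n := braidGen ⟨0, by omega⟩
  have asymm (a : BraidGroup n) (ha : DPos a) (ha' : DPos a⁻¹) : False := by
    rcases htri a with ⟨-, h, -⟩ | ⟨-, -, h⟩ | ⟨-, -, h⟩ <;> contradiction
  have step (i : Fin (n - 1)) (hi : 0 < (i : ℕ)) (hβ : IsIPositive β i) :
      IsIPositive (σ₁⁻¹ * β) i :=
    hβ.braidGen_inv_mul (Fin.lt_def.2 hi)
  have power (hβ : IsIPositive β ⟨0, by omega⟩) : ∃ m : ℕ, 0 < m ∧ β = σ₁ ^ m :=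
    hβ.exists_eq_braidGen_pow rfl
  refine ⟨step, fun hβ => ?_, ?_⟩
  · obtain ⟨m, hm, hβm⟩ := power hβ
    exact ⟨m, by omega, by rw [hβm, zpow_natCast]⟩
  rintro ⟨i, hβ⟩ hlt
  rcases Nat.eq_zero_or_pos i with hi | hi
  · obtain rfl : i = ⟨0, Nat.sub_pos_of_lt hn⟩ := Fin.ext hi
    obtain ⟨m, hm, rfl⟩ := power hβ
    obtain ⟨k, rfl⟩ := Nat.exists_eq_succ_of_ne_zero hm.ne'
    rcases k with _ | k
    · exact asymm 1 (by simpa using hlt) (by simpa using hlt)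
    · refine asymm _ hlt ?_
      rw [mul_inv_rev, inv_inv, pow_succ', inv_mul_cancel_left]
      exact ⟨_, isIPositive_braidGen_pow _ k.succ_pos⟩
  · exact asymm _ hlt (by rw [mul_inv_rev, inv_inv]; exact ⟨i, step i hi hβ⟩)
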